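/- arXiv:2407.03975 — 2 statements merged into one kernel-verified Lean document; each statement's English description precedes it below -/
import Mathlib

section
/- For every α > 0 there exists a constant C > 0 such that for every ε ∈ (0,1] and every t ∈ ℝ with dist(t,ℤ) > 1/4 one has f_{1/2}(t) + (4α/π²)·ε·f₁(t) ≥ 2αε − C·ε^{3/2}·f₁(t). -/
/-- The distance of a real number to the set of integers. -/
noncomputable def distZ (t : ℝ) : ℝ := ⨅ n : ℤ, |t - n|

/-- The distance of a real number to the set of half-integers `(1/2)ℤ`. -/
noncomputable def distHalfZ (t : ℝ) : ℝ := ⨅ n : ℤ, |t - n / 2|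

/-- The interaction potential `f₁(t) = 2π²·dist(t,ℤ)²`. -/
noncomputable def f1 (t : ℝ) : ℝ := 2 * Real.pi ^ 2 * distZ t ^ 2

/-- The interaction potential `f_{1/2}(t) = 2π²·dist(t,(1/2)ℤ)²`. -/
noncomputable def fHalf (t : ℝ) : ℝ := 2 * Real.pi ^ 2 * distHalfZ t ^ 2

lemma bddZ (t : ℝ) : BddBelow (Set.range fun n : ℤ => |t - n|) := by
  refine ⟨0, ?_⟩; rintro x ⟨n, rfl⟩; exact abs_nonneg _

lemma distZ_le (t : ℝ) (n : ℤ) : distZ t ≤ |t - n| := ciInf_le (bddZ t) n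

lemma distZ_eq (t : ℝ) : distZ t = |t - round t| := by
  refine le_antisymm (distZ_le t (round t)) (le_ciInf fun n => ?_)
  rcases eq_or_ne n (round t) with rfl | h
  · exact le_refl _
  · have h1 : (1 : ℝ) ≤ |(n : ℝ) - (round t : ℝ)| := by
      have h0 : (1 : ℤ) ≤ |n - round t| := Int.one_le_abs (sub_ne_zero.mpr h)
      exact_mod_cast h0
    have h2 : |t - (round t : ℝ)| ≤ 1 / 2 := abs_sub_round t
    have h3 : |(n : ℝ) - (round t : ℝ)| ≤ |t - n| + |t - (round t : ℝ)| :=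
      calc |(n : ℝ) - (round t : ℝ)| = |(t - (round t : ℝ)) - (t - n)| := by ring_nf
        _ ≤ |t - (round t : ℝ)| + |t - n| := abs_sub _ _
        _ = |t - n| + |t - (round t : ℝ)| := by ring
    linarith

lemma distHalfZ_ge (t : ℝ) (h : distZ t > 1 / 4) :
    distHalfZ t ≥ 1 / 2 - |t - round t| := by
  refine le_ciInf fun n => ?_
  have hd := distZ_eq t
  rcases Int.even_or_odd n with ⟨k, hk⟩ | ⟨k, hk⟩
  · have h1 : distZ t ≤ |t - k| := distZ_le t k
    have h2 : ((n : ℝ)) / 2 = (k : ℝ) := by rw [hk]; push_cast; ring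
    rw [h2]
    have h3 : |t - (round t : ℝ)| > 1 / 4 := by rw [← hd]; exact h
    linarith
  · have h1 : (1 : ℝ) ≤ |(n : ℝ) - 2 * (round t : ℝ)| := by
      have hne : n - 2 * round t ≠ 0 := by omega
      have h0 : (1 : ℤ) ≤ |n - 2 * round t| := Int.one_le_abs hne
      exact_mod_cast h0
    have h3 : |(n : ℝ) / 2 - (round t : ℝ)| ≤ |t - n / 2| + |t - (round t : ℝ)| :=
      calc |(n : ℝ) / 2 - (round t : ℝ)| = |(t - (round t : ℝ)) - (t - n / 2)| := by ring_nf
        _ ≤ |t - (round t : ℝ)| + |t - n / 2| := abs_sub _ _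
        _ = |t - n / 2| + |t - (round t : ℝ)| := by ring
    have h4 : |(n : ℝ) / 2 - (round t : ℝ)| = |(n : ℝ) - 2 * (round t : ℝ)| / 2 := by
      have he : (n : ℝ) / 2 - (round t : ℝ) = ((n : ℝ) - 2 * (round t : ℝ)) / 2 := by ring
      rw [he, abs_div]
      norm_num
    linarith

/-- for every `α > 0` there is `C > 0` such that for every `ε ∈ (0,1]` and every
`t` with `dist(t,ℤ) > 1/4` one has
`f_{1/2}(t) + (4α/π²)·ε·f₁(t) ≥ 2αε − C·ε^{3/2}·f₁(t)`. -/
theorem stmt5 (α : ℝ) (hα : 0 < α) :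
    ∃ C : ℝ, 0 < C ∧ ∀ ε ∈ Set.Ioc (0 : ℝ) 1, ∀ t : ℝ, distZ t > 1 / 4 →
      fHalf t + 4 * α / Real.pi ^ 2 * ε * f1 t ≥
        2 * α * ε - C * ε ^ ((3 : ℝ) / 2) * f1 t := by
  have hπ : (0 : ℝ) < Real.pi := Real.pi_pos
  refine ⟨64 * α ^ 2 / Real.pi ^ 4 + 1, by positivity, ?_⟩
  rintro ε ⟨hε0, hε1⟩ t ht
  obtain ⟨d, hdd⟩ : ∃ d : ℝ, d = |t - round t| := ⟨_, rfl⟩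
  have hd : distZ t = d := by rw [hdd]; exact distZ_eq t
  have hd14 : d > 1 / 4 := by rw [← hd]; exact ht
  have hd12 : d ≤ 1 / 2 := by rw [hdd]; exact abs_sub_round t
  have hs0 : (0 : ℝ) ≤ 1 / 2 - d := by linarith
  have hH : distHalfZ t ≥ 1 / 2 - d := by rw [hdd]; exact distHalfZ_ge t ht
  have hH2 : distHalfZ t ^ 2 ≥ (1 / 2 - d) ^ 2 := by nlinarith
  have hX : ε ^ ((3 : ℝ) / 2) ≥ ε ^ 2 := by
    have h := Real.rpow_le_rpow_of_exponent_ge hε0 hε1 (by norm_num : (3:ℝ)/2 ≤ 2)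
    rwa [Real.rpow_two] at h
  rw [ge_iff_le, ← sub_nonneg]
  have key : fHalf t + 4 * α / Real.pi ^ 2 * ε * f1 t -
      (2 * α * ε - (64 * α ^ 2 / Real.pi ^ 4 + 1) * ε ^ ((3 : ℝ) / 2) * f1 t) =
      2 * Real.pi ^ 2 * distHalfZ t ^ 2 + 8 * α * ε * d ^ 2 +
        (64 * α ^ 2 / Real.pi ^ 4 + 1) * ε ^ ((3 : ℝ) / 2) * (2 * Real.pi ^ 2 * d ^ 2)
        - 2 * α * ε := by
    simp only [fHalf, f1, hd]
    field_simp
    ring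
  rw [key]
  have hε2 : (0 : ℝ) ≤ ε ^ 2 := sq_nonneg ε
  have hle1 : 64 * α ^ 2 / Real.pi ^ 4 ≤ 64 * α ^ 2 / Real.pi ^ 4 + 1 := by linarith
  have hd2 : (1 : ℝ) / 16 ≤ d ^ 2 := by nlinarith
  have hB : Real.pi ^ 2 / 8 ≤ 2 * Real.pi ^ 2 * d ^ 2 := by
    have := mul_le_mul_of_nonneg_left hd2 (show (0:ℝ) ≤ 2 * Real.pi ^ 2 by positivity)
    linarith
  have step1 : (64 * α ^ 2 / Real.pi ^ 4) * ε ^ 2 * (Real.pi ^ 2 / 8) ≤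
      (64 * α ^ 2 / Real.pi ^ 4 + 1) * ε ^ ((3 : ℝ) / 2) * (2 * Real.pi ^ 2 * d ^ 2) := by
    have hmm : (64 * α ^ 2 / Real.pi ^ 4) * ε ^ 2 ≤
        (64 * α ^ 2 / Real.pi ^ 4 + 1) * ε ^ ((3 : ℝ) / 2) :=
      mul_le_mul hle1 hX hε2 (by positivity)
    exact mul_le_mul hmm hB (by positivity) (by positivity)
  have step2 : (64 * α ^ 2 / Real.pi ^ 4) * ε ^ 2 * (Real.pi ^ 2 / 8) =
      8 * α ^ 2 * ε ^ 2 / Real.pi ^ 2 := by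
    field_simp; ring
  have hterm : 8 * α ^ 2 * ε ^ 2 / Real.pi ^ 2 ≤
      (64 * α ^ 2 / Real.pi ^ 4 + 1) * ε ^ ((3 : ℝ) / 2) * (2 * Real.pi ^ 2 * d ^ 2) := by
    rw [← step2]; exact step1
  have hmid : 8 * α * ε * d ^ 2 ≥ 2 * α * ε - 8 * α * ε * (1 / 2 - d) := by
    nlinarith [mul_nonneg (mul_nonneg hα.le hε0.le) (sq_nonneg (d - 1/2))]
  have hAineq : 2 * Real.pi ^ 2 * (1 / 2 - d) ^ 2 + 8 * α ^ 2 * ε ^ 2 / Real.pi ^ 2 ≥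
      8 * α * ε * (1 / 2 - d) := by
    rw [ge_iff_le, ← sub_nonneg]
    have he : 2 * Real.pi ^ 2 * (1 / 2 - d) ^ 2 + 8 * α ^ 2 * ε ^ 2 / Real.pi ^ 2 -
        8 * α * ε * (1 / 2 - d) =
        2 * (Real.pi * (1 / 2 - d) - 2 * α * ε / Real.pi) ^ 2 := by
      field_simp; ring
    rw [he]; positivity
  have h2H : 2 * Real.pi ^ 2 * distHalfZ t ^ 2 ≥ 2 * Real.pi ^ 2 * (1 / 2 - d) ^ 2 :=
    mul_le_mul_of_nonneg_left hH2 (by positivity)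
  linarith
end

section
/- Let Ω ⊆ ℝ² be open and bounded, and let Ω' ⊆ Ω satisfy dist(Ω', ∂Ω) > 0 (for instance, Ω' compactly contained in Ω). Let (I_j)_{j∈ℕ} be a family of pairwise disjoint open segments, each contained in Ω and having both endpoints on ∂Ω, with ℋ¹(⋃_{j∈ℕ} I_j) < ∞. Then the set { j ∈ ℕ : I_j ∩ Ω' ≠ ∅ } is finite. -/
/-! An open segment carries `ℋ¹`-mass equal to its length, since it differs from the closed
segment only by its two endpoints. A segment meeting `Ω'` has both endpoints on `∂Ω`, hence at
distance at least `δ` from the meeting point, so its length is at least `2δ`. Disjoint sets of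
mass at least `2δ` inside a set of finite `ℋ¹`-measure can only be finitely many. -/

/-- The plane `ℝ²` with the Euclidean norm. -/
abbrev Plane : Type := EuclideanSpace ℝ (Fin 2)

open MeasureTheory

theorem isCompact_segment {E : Type*} [AddCommGroup E] [Module ℝ E] [TopologicalSpace E]
    [IsTopologicalAddGroup E] [ContinuousSMul ℝ E] (x y : E) : IsCompact (segment ℝ x y) := by
  rw [segment_eq_image_lineMap]
  exact isCompact_Icc.image AffineMap.lineMap_continuous

section HausdorffMeasure

variable {E : Type*} [NormedAddCommGroup E] [NormedSpace ℝ E] [MeasurableSpace E] [BorelSpace E]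

theorem openSegment_ae_eq_segment (x y : E) :
    openSegment ℝ x y =ᵐ[μH[1]] segment ℝ x y := by
  have := Measure.nullSingletonClass_hausdorff E one_pos
  rw [← insert_endpoints_openSegment]
  exact ((insert_ae_eq_self x _).trans (insert_ae_eq_self y _)).symm

theorem nullMeasurableSet_openSegment (x y : E) :
    NullMeasurableSet (openSegment ℝ x y) μH[1] :=
  (isCompact_segment x y).isClosed.measurableSet.nullMeasurableSet.congr
    (openSegment_ae_eq_segment x y).symm

@[simp]
theorem hausdorffMeasure_openSegment (x y : E) : μH[1] (openSegment ℝ x y) = edist x y := by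
  rw [measure_congr (openSegment_ae_eq_segment x y), hausdorffMeasure_segment]

theorem ofReal_two_mul_le_hausdorffMeasure_openSegment {a b x : E} {δ : ℝ}
    (hx : x ∈ openSegment ℝ a b) (ha : δ ≤ dist x a) (hb : δ ≤ dist x b) :
    ENNReal.ofReal (2 * δ) ≤ μH[1] (openSegment ℝ a b) := by
  have hsum : dist x a + dist x b = dist a b := by
    rw [dist_comm x a]
    exact dist_add_dist_of_mem_segment (openSegment_subset_segment ℝ a b hx)
  rw [hausdorffMeasure_openSegment, edist_dist]
  exact ENNReal.ofReal_le_ofReal (by linarith)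

end HausdorffMeasure

theorem stmt19_general (Ω : Set Plane)
    (Ω' : Set Plane)
    (hdist : ∃ δ : ℝ, 0 < δ ∧ ∀ x ∈ Ω', ∀ y ∈ frontier Ω, δ ≤ dist x y)
    (y : ℕ → Plane × Plane)
    (hfr : ∀ j, (y j).1 ∈ frontier Ω ∧ (y j).2 ∈ frontier Ω)
    (hdisj : Pairwise (Function.onFun Disjoint (fun j => openSegment ℝ (y j).1 (y j).2)))
    (hH1 : (MeasureTheory.Measure.hausdorffMeasure 1 : MeasureTheory.Measure Plane)
        (⋃ j, openSegment ℝ (y j).1 (y j).2) < ⊤) :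
    {j : ℕ | (openSegment ℝ (y j).1 (y j).2 ∩ Ω').Nonempty}.Finite := by
  obtain ⟨δ, hδ, hδΩ⟩ := hdist
  have hlong : {j : ℕ | ENNReal.ofReal (2 * δ) ≤ μH[1] (openSegment ℝ (y j).1 (y j).2)}.Finite :=
    Measure.finite_const_le_meas_of_disjoint_iUnion₀ μH[1] (ENNReal.ofReal_pos.2 (by positivity))
      (fun j => nullMeasurableSet_openSegment _ _) (fun _ _ hij => (hdisj hij).aedisjoint) hH1.ne
  refine hlong.subset ?_
  rintro j ⟨x, hxI, hxΩ'⟩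
  exact ofReal_two_mul_le_hausdorffMeasure_openSegment hxI
    (hδΩ x hxΩ' _ (hfr j).1) (hδΩ x hxΩ' _ (hfr j).2)

/-- if `Ω ⊆ ℝ²` is open and bounded, `Ω' ⊆ Ω` is at positive distance from `∂Ω`,
and `(I_j)_{j∈ℕ}` is a pairwise disjoint family of open segments contained in `Ω` with endpoints
on `∂Ω` whose union has finite `ℋ¹` measure, then only finitely many `I_j` meet `Ω'`. -/
theorem stmt19 (Ω : Set Plane) (hΩo : IsOpen Ω) (hΩb : Bornology.IsBounded Ω)
    (Ω' : Set Plane) (hsub : Ω' ⊆ Ω)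
    (hdist : ∃ δ : ℝ, 0 < δ ∧ ∀ x ∈ Ω', ∀ y ∈ frontier Ω, δ ≤ dist x y)
    (y : ℕ → Plane × Plane)
    (hne : ∀ j, (y j).1 ≠ (y j).2)
    (hfr : ∀ j, (y j).1 ∈ frontier Ω ∧ (y j).2 ∈ frontier Ω)
    (hsegsub : ∀ j, openSegment ℝ (y j).1 (y j).2 ⊆ Ω)
    (hdisj : Pairwise (Function.onFun Disjoint (fun j => openSegment ℝ (y j).1 (y j).2)))
    (hH1 : (MeasureTheory.Measure.hausdorffMeasure 1 : MeasureTheory.Measure Plane)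
        (⋃ j, openSegment ℝ (y j).1 (y j).2) < ⊤) :
    {j : ℕ | (openSegment ℝ (y j).1 (y j).2 ∩ Ω').Nonempty}.Finite :=
  stmt19_general Ω Ω' hdist y hfr hdisj hH1
end
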